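/- The function g is nowhere differentiable on [0,1]: for every x in [0,1], g is not differentiable at x. In fact, every subinterval of [0,1] of length 1/2^n contains two points x, y with |g(x) − g(y)| > 1/2^{n+2}, so that |g(x) − g(y)|/|x − y| > 1/4. -/

import Mathlib

/-!
At a dyadic point, `2^(m+1) g(k/2^m) = -W` for an integer `W ≡ m k (mod 2)`. Hence the slope of
`g` over a dyadic interval of length `2^-j` lies in `ℤ + j/2`, so slopes over nested dyadic
intervals of consecutive lengths differ by at least `1/2`; both cannot be within `1/8` of a
derivative at a point they straddle. For the oscillation bound, the dyadic points `k/2^(n+1)` and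
`(4k+3)/2^(n+3)` lie in the interval and their values differ by `(3n+7)/2^(n+4)`.
-/

open Filter Topology

noncomputable section

/-- The `n`-th binary digit of `x` (the terminating expansion at dyadic
rationals): `x_n = ⌊2^n x⌋ mod 2`. -/
def binDigit (n : ℕ) (x : ℝ) : ℝ :=
  ((⌊(2 : ℝ) ^ n * x⌋ % 2 : ℤ) : ℝ)

/-- `g(x) = -∑_{n ≥ 1} (n/2) x_n / 2^n` where `x = ∑ x_n / 2^n` is the binary
expansion of `x`. -/
def gfun (x : ℝ) : ℝ :=
  -∑' n : ℕ, ((n + 1 : ℝ) / 2) * binDigit (n + 1) x / 2 ^ (n + 1)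

def dyadicWeight (m k : ℕ) : ℕ :=
  ∑ j ∈ Finset.range m, (j + 1) * (k / 2 ^ (m - 1 - j) % 2) * 2 ^ (m - 1 - j)

theorem dyadicWeight_succ (m k : ℕ) :
    dyadicWeight (m + 1) k = (m + 1) * (k % 2) + 2 * dyadicWeight m (k / 2) := by
  rw [dyadicWeight, Finset.sum_range_succ, dyadicWeight, Finset.mul_sum, add_comm]
  congr 1
  · simp
  · refine Finset.sum_congr rfl fun j hj => ?_
    obtain ⟨i, hi⟩ : ∃ i, m + 1 - 1 - j = i + 1 ∧ m - 1 - j = i :=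
      ⟨m - 1 - j, by have := Finset.mem_range.1 hj; omega, rfl⟩
    rw [hi.1, hi.2, pow_succ', Nat.div_div_eq_div_mul]
    ring

theorem dyadicWeight_succ_succ_four_mul_add_three (m k : ℕ) :
    dyadicWeight (m + 2) (4 * k + 3) = 4 * dyadicWeight m k + 3 * m + 4 := by
  rw [dyadicWeight_succ, dyadicWeight_succ, show (4 * k + 3) / 2 = 2 * k + 1 by omega,
    show (2 * k + 1) / 2 = k by omega, show (4 * k + 3) % 2 = 1 by omega,
    show (2 * k + 1) % 2 = 1 by omega]
  ring

theorem even_dyadicWeight_add_mul (m k : ℕ) : Even (dyadicWeight m k + m * k) := by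
  cases m with
  | zero => simp [dyadicWeight]
  | succ m =>
    rw [dyadicWeight_succ]
    obtain ⟨r, hr⟩ : Even (k % 2 + k) := by rw [Nat.even_add]; simp [Nat.even_iff]
    exact ⟨(m + 1) * r + dyadicWeight m (k / 2), by linear_combination (m + 1) * hr⟩

theorem binDigit_natCast_div_two_pow (j m k : ℕ) :
    binDigit j (k / 2 ^ m) = (k * 2 ^ j / 2 ^ m % 2 : ℕ) := by
  have hquot : (2 : ℝ) ^ j * (k / 2 ^ m) = ((k * 2 ^ j : ℕ) : ℝ) / ((2 ^ m : ℕ) : ℝ) := by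
    push_cast
    ring
  rw [binDigit, hquot, ← Int.natCast_floor_eq_floor (by positivity), Nat.floor_div_eq_div]
  norm_cast

theorem binDigit_natCast_div_two_pow_of_le {j m : ℕ} (k : ℕ) (h : j ≤ m) :
    binDigit j (k / 2 ^ m) = (k / 2 ^ (m - j) % 2 : ℕ) := by
  rw [binDigit_natCast_div_two_pow, ← Nat.sub_add_cancel h, pow_add,
    Nat.mul_div_mul_right _ _ (by positivity), Nat.add_sub_cancel]

theorem binDigit_natCast_div_two_pow_of_lt {j m : ℕ} (k : ℕ) (h : m < j) :
    binDigit j (k / 2 ^ m) = 0 := by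
  rw [binDigit_natCast_div_two_pow, ← Nat.sub_add_cancel h.le, pow_add, ← mul_assoc,
    Nat.mul_div_cancel _ (by positivity), Nat.mul_mod,
    Nat.pow_mod, Nat.mod_self, zero_pow (by omega)]
  simp

theorem gfun_natCast_div_two_pow (m k : ℕ) :
    gfun (k / 2 ^ m) = -(dyadicWeight m k) / 2 ^ (m + 1) := by
  have hvanish : ∀ j ∉ Finset.range m,
      ((j + 1 : ℝ) / 2) * binDigit (j + 1) (k / 2 ^ m) / 2 ^ (j + 1) = 0 := by
    intro j hj
    rw [binDigit_natCast_div_two_pow_of_lt k (by simpa using hj)]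
    ring
  rw [gfun, tsum_eq_sum hvanish, dyadicWeight, Nat.cast_sum, neg_div, Finset.sum_div]
  congr 1
  refine Finset.sum_congr rfl fun j hj => ?_
  have hj := Finset.mem_range.1 hj
  rw [binDigit_natCast_div_two_pow_of_le k (by omega : j + 1 ≤ m),
    show m - (j + 1) = m - 1 - j by omega,
    show m + 1 = (m - 1 - j) + (j + 1) + 1 by omega]
  push_cast
  field_simp
  ring

theorem exists_int_two_pow_mul_gfun_sub (j k : ℕ) :
    ∃ z : ℤ, 2 ^ j * (gfun ((k + 1 : ℕ) / 2 ^ j) - gfun (k / 2 ^ j)) = z + j / 2 := by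
  obtain ⟨a, ha⟩ := even_dyadicWeight_add_mul j (k + 1)
  obtain ⟨b, hb⟩ := even_dyadicWeight_add_mul j k
  refine ⟨b - a, ?_⟩
  have ha' : (dyadicWeight j (k + 1) : ℝ) + j * (k + 1) = a + a := by exact_mod_cast ha
  have hb' : (dyadicWeight j k : ℝ) + j * k = b + b := by exact_mod_cast hb
  rw [gfun_natCast_div_two_pow, gfun_natCast_div_two_pow, pow_succ]
  push_cast
  field_simp
  linear_combination hb' - ha'

theorem half_le_abs_intCast_sub_half (z : ℤ) : 1 / 2 ≤ |(z : ℝ) - 1 / 2| := by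
  rcases le_or_gt z 0 with hz | hz
  · have : (z : ℝ) ≤ 0 := by exact_mod_cast hz
    rw [abs_of_neg (by linarith)]
    linarith
  · have : (1 : ℝ) ≤ z := by exact_mod_cast hz
    rw [abs_of_pos (by linarith)]
    linarith

theorem HasDerivWithinAt.exists_abs_sub_le_of_le_of_le {f : ℝ → ℝ} {s : Set ℝ} {c L ε : ℝ}
    (hf : HasDerivWithinAt f L s c) (hε : 0 < ε) :
    ∃ δ > 0, ∀ u ∈ s, ∀ v ∈ s, u ≤ c → c ≤ v → v - u < δ →
      |f v - f u - (v - u) * L| ≤ ε * (v - u) := by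
  have hlo := hf.isLittleO.def hε
  rw [eventually_nhdsWithin_iff] at hlo
  obtain ⟨δ, hδ, hball⟩ := Metric.eventually_nhds_iff.1 hlo
  refine ⟨δ, hδ, fun u hu v hv huc hcv huv => ?_⟩
  have hu' := hball (by rw [Real.dist_eq, abs_of_nonpos (by linarith)]; linarith) hu
  have hv' := hball (by rw [Real.dist_eq, abs_of_nonneg (by linarith)]; linarith) hv
  simp only [Real.norm_eq_abs, smul_eq_mul, abs_of_nonpos (sub_nonpos.2 huc),
    abs_of_nonneg (sub_nonneg.2 hcv)] at hu' hv'
  calc |f v - f u - (v - u) * L|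
      = |(f v - f c - (v - c) * L) - (f u - f c - (u - c) * L)| := by ring_nf
    _ ≤ |f v - f c - (v - c) * L| + |f u - f c - (u - c) * L| := abs_sub _ _
    _ ≤ ε * (v - u) := by linarith

theorem exists_dyadic_Icc_mem {c : ℝ} (hc : c ∈ Set.Icc (0 : ℝ) 1) (j : ℕ) :
    ∃ k : ℕ, k + 1 ≤ 2 ^ j ∧ k / 2 ^ j ≤ c ∧ c ≤ (k + 1 : ℕ) / 2 ^ j := by
  have h2j : (0 : ℝ) < 2 ^ j := by positivity
  rcases hc.2.lt_or_eq with hc1 | rfl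
  · have hlt : ⌊2 ^ j * c⌋₊ < 2 ^ j := by
      rw [Nat.floor_lt (by have := hc.1; positivity)]
      push_cast
      nlinarith
    refine ⟨⌊2 ^ j * c⌋₊, hlt, ?_, ?_⟩
    · rw [div_le_iff₀ h2j, mul_comm]
      exact Nat.floor_le (by have := hc.1; positivity)
    · rw [le_div_iff₀ h2j, mul_comm]
      exact_mod_cast (Nat.lt_floor_add_one _).le
  · refine ⟨2 ^ j - 1, by have := Nat.one_le_two_pow (n := j); omega, ?_, ?_⟩
    · rw [div_le_one h2j]
      exact_mod_cast Nat.sub_le _ _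
    · rw [Nat.sub_add_cancel Nat.one_le_two_pow]
      push_cast
      exact (div_self h2j.ne').ge

theorem eventually_exists_int_abs_add_half_sub_le {c L : ℝ} (hc : c ∈ Set.Icc (0 : ℝ) 1)
    (hL : HasDerivWithinAt gfun L (Set.Icc 0 1) c) :
    ∀ᶠ j : ℕ in atTop, ∃ z : ℤ, |z + j / 2 - L| ≤ 1 / 8 := by
  obtain ⟨δ, hδ, hslope⟩ := hL.exists_abs_sub_le_of_le_of_le (by norm_num : (0 : ℝ) < 1 / 8)
  obtain ⟨m, hm⟩ := exists_pow_lt_of_lt_one hδ (by norm_num : (1 / 2 : ℝ) < 1)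
  filter_upwards [eventually_ge_atTop m] with j hj
  obtain ⟨k, hk, hkc, hck⟩ := exists_dyadic_Icc_mem hc j
  obtain ⟨z, hz⟩ := exists_int_two_pow_mul_gfun_sub j k
  have hpos : (0 : ℝ) < 2 ^ j := by positivity
  have hk' : (k : ℝ) + 1 ≤ 2 ^ j := by exact_mod_cast hk
  have hlen : ((k + 1 : ℕ) : ℝ) / 2 ^ j - k / 2 ^ j = 1 / 2 ^ j := by
    push_cast
    ring
  have hsmall : 1 / 2 ^ j < δ := by
    rw [← one_div_pow]
    exact (pow_le_pow_of_le_one (by norm_num) (by norm_num) hj).trans_lt hm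
  have h := hslope _ ⟨by positivity, by rw [div_le_one hpos]; linarith⟩
    _ ⟨by positivity, by rw [div_le_one hpos]; push_cast; linarith⟩ hkc hck (hlen ▸ hsmall)
  rw [hlen] at h
  refine ⟨z, ?_⟩
  set D := gfun ((k + 1 : ℕ) / 2 ^ j) - gfun (k / 2 ^ j)
  calc |z + j / 2 - L| = 2 ^ j * |D - 1 / 2 ^ j * L| := by
        rw [← hz, ← abs_of_pos hpos, ← abs_mul, abs_of_pos hpos]
        congr 1
        field_simp
    _ ≤ 2 ^ j * (1 / 8 * (1 / 2 ^ j)) := by gcongr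
    _ = 1 / 8 := by field_simp

theorem not_differentiableWithinAt_gfun {c : ℝ} (hc : c ∈ Set.Icc (0 : ℝ) 1) :
    ¬ DifferentiableWithinAt ℝ gfun (Set.Icc 0 1) c := by
  intro hd
  have hclose := eventually_exists_int_abs_add_half_sub_le hc hd.hasDerivWithinAt
  obtain ⟨j, ⟨z₁, h₁⟩, ⟨z₂, h₂⟩⟩ :=
    (hclose.and ((tendsto_add_atTop_nat 1).eventually hclose)).exists
  have hgap := half_le_abs_intCast_sub_half (z₁ - z₂)
  push_cast at hgap h₂
  rw [abs_le] at h₁ h₂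
  rcases le_abs'.1 hgap with h | h <;> linarith

theorem gfun_sub_gfun_four_mul_add_three (m k : ℕ) :
    gfun (k / 2 ^ m) - gfun ((4 * k + 3 : ℕ) / 2 ^ (m + 2)) = (3 * m + 4) / (8 * 2 ^ m) := by
  rw [gfun_natCast_div_two_pow, gfun_natCast_div_two_pow,
    dyadicWeight_succ_succ_four_mul_add_three]
  push_cast
  field_simp
  ring

theorem exists_mem_Icc_gfun_oscillation (n : ℕ) {a b : ℝ} (ha : 0 ≤ a)
    (hab : b - a = 1 / 2 ^ n) :
    ∃ x ∈ Set.Icc a b, ∃ y ∈ Set.Icc a b, x ≠ y ∧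
      1 / 2 ^ (n + 2) < |gfun x - gfun y| ∧ 1 / 4 < |gfun x - gfun y| / |x - y| := by
  set k := ⌈2 ^ (n + 1) * a⌉₊
  have hak : 2 ^ (n + 1) * a ≤ k := Nat.le_ceil _
  have hka : (k : ℝ) < 2 ^ (n + 1) * a + 1 := Nat.ceil_lt_add_one (by positivity)
  have hdiff := gfun_sub_gfun_four_mul_add_three (n + 1) k
  set x : ℝ := k / 2 ^ (n + 1)
  set y : ℝ := ((4 * k + 3 : ℕ) : ℝ) / 2 ^ (n + 1 + 2)
  simp only [pow_succ, Nat.cast_add, Nat.cast_one] at hdiff hak hka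
  have hyx : y - x = 3 / (8 * 2 ^ n) := by
    simp only [x, y, pow_succ]
    push_cast
    field_simp
    ring
  have hax : a ≤ x := by
    rw [le_div_iff₀ (by positivity), mul_comm]
    exact hak
  have hyb : y ≤ b := by
    rw [div_le_iff₀ (by positivity), show b = a + 1 / 2 ^ n by linarith]
    simp only [pow_succ]
    push_cast
    field_simp
    nlinarith
  have hxy : x < y := by rw [← sub_pos, hyx]; positivity
  refine ⟨x, ⟨hax, by linarith⟩, y, ⟨by linarith, hyb⟩, hxy.ne, ?_, ?_⟩
  · rw [hdiff, abs_of_pos (by positivity), div_lt_div_iff₀ (by positivity) (by positivity)]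
    simp only [pow_succ]
    nlinarith [pow_pos (two_pos : (0 : ℝ) < 2) n]
  · rw [hdiff, abs_of_pos (by positivity), abs_sub_comm, hyx, abs_of_pos (by positivity)]
    field_simp
    linarith

theorem stmt19 :
    -- g is nowhere differentiable on [0,1]
    (∀ x ∈ Set.Icc (0 : ℝ) 1,
      ¬ DifferentiableWithinAt ℝ gfun (Set.Icc (0 : ℝ) 1) x) ∧
    -- each subinterval of [0,1] of length 1/2^n contains a pair of points at
    -- gfun-distance greater than 1/2^{n+2}, giving difference quotients > 1/4
    (∀ n : ℕ, ∀ a b : ℝ, 0 ≤ a → b ≤ 1 → b - a = 1 / 2 ^ n →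
      ∃ x ∈ Set.Icc a b, ∃ y ∈ Set.Icc a b, x ≠ y ∧
        1 / 2 ^ (n + 2) < |gfun x - gfun y| ∧
        1 / 4 < |gfun x - gfun y| / |x - y|) :=
  ⟨fun _ hx => not_differentiableWithinAt_gfun hx,
    fun n _ _ ha _ hab => exists_mem_Icc_gfun_oscillation n ha hab⟩
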